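/- arXiv:1503.02208 — 3 statements merged into one kernel-verified Lean document; each statement's English description precedes it below -/
import Mathlib

section
/- A regular left ideal with n quotients has at most 2^{n-1} + 1 atoms. -/
/-!
Since `L = Σ*L`, every quotient `w⁻¹L` contains `L = K_1`. So if an atom `A_S` contains a word
`x` and `1 ∈ S`, then `x ∈ L ⊆ K_i` for every `i`, forcing `S = {1, …, n}`. Hence the nonempty
atoms are indexed by `{1, …, n}` or by one of the `2^(n-1)` subsets avoiding `1`.
-/

/-- Left quotient of a language by a word: `w⁻¹L = {x | wx ∈ L}`. -/
def leftQuotient {α : Type*} (L : Set (List α)) (w : List α) : Set (List α) :=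
  {x | w ++ x ∈ L}

/-- Atomic intersection `A_S = ⋂_{i ∈ S} K_i ∩ ⋂_{i ∉ S} K_iᶜ`. -/
def atomicInter {α : Type*} {n : ℕ} (K : Fin n → Set (List α)) (S : Set (Fin n)) :
    Set (List α) :=
  (⋂ i ∈ S, K i) ∩ (⋂ i ∈ Sᶜ, (K i)ᶜ)

open Set

theorem subset_leftQuotient_of_eq_top_mul {α : Type*} {L : Set (List α)}
    (hL : (show Language α from L) = ⊤ * (show Language α from L)) (w : List α) :
    L ⊆ leftQuotient L w := by
  intro x hx
  have hwx : w ++ x ∈ (⊤ * (show Language α from L) : Language α) := ⟨w, trivial, x, hx, rfl⟩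
  rwa [← hL] at hwx

theorem eq_univ_or_notMem_of_atomicInter_nonempty {α : Type*} {n : ℕ}
    {K : Fin n → Set (List α)} {i : Fin n} (hK : ∀ j, K i ⊆ K j) {S : Set (Fin n)}
    (hS : (atomicInter K S).Nonempty) : S = univ ∨ i ∉ S := by
  obtain ⟨x, hxS, hxSc⟩ := hS
  refine or_iff_not_imp_right.2 fun hi => eq_univ_of_forall fun j => ?_
  by_contra hj
  exact mem_iInter₂.1 hxSc j hj (hK j (mem_iInter₂.1 hxS i (not_not.1 hi)))

theorem ncard_setOf_notMem {ι : Type*} [Finite ι] (i : ι) :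
    {S : Set ι | i ∉ S}.ncard = 2 ^ (Nat.card ι - 1) := by
  have h : {S : Set ι | i ∉ S} = 𝒫 {i}ᶜ := by
    ext S
    simp [subset_compl_singleton_iff]
  rw [h, ncard_powerset, ncard_compl, ncard_singleton]

theorem ncard_le_of_forall_eq_univ_or_notMem {ι : Type*} [Finite ι] {𝒮 : Set (Set ι)} (i : ι)
    (h𝒮 : ∀ S ∈ 𝒮, S = univ ∨ i ∉ S) : 𝒮.ncard ≤ 2 ^ (Nat.card ι - 1) + 1 :=
  calc 𝒮.ncard ≤ (insert univ {S : Set ι | i ∉ S}).ncard := ncard_le_ncard h𝒮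
    _ ≤ {S : Set ι | i ∉ S}.ncard + 1 := ncard_insert_le _ _
    _ = 2 ^ (Nat.card ι - 1) + 1 := by rw [ncard_setOf_notMem]

theorem left_ideal_card_atoms_general {α : Type*} {n : ℕ} (hn : 0 < n)
    (L : Set (List α)) (K : Fin n → Set (List α))
    (hL : (show Language α from L) = ⊤ * (show Language α from L))
    (hq : ∀ i, ∃ w, K i = leftQuotient L w)
    (hK0 : K ⟨0, hn⟩ = L) :
    Set.ncard {S : Set (Fin n) | (atomicInter K S).Nonempty} ≤ 2 ^ (n - 1) + 1 := by
  have hK : ∀ j, K ⟨0, hn⟩ ⊆ K j := fun j => by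
    obtain ⟨w, hw⟩ := hq j
    rw [hK0, hw]
    exact subset_leftQuotient_of_eq_top_mul hL w
  have h := ncard_le_of_forall_eq_univ_or_notMem (𝒮 := {S | (atomicInter K S).Nonempty}) _
    fun S hS => eq_univ_or_notMem_of_atomicInter_nonempty hK hS
  rwa [Nat.card_fin] at h

/-- A regular left ideal with `n` quotients has at most `2^(n-1) + 1` atoms. -/
theorem left_ideal_card_atoms {α : Type*} {n : ℕ} (hn : 0 < n)
    (L : Set (List α)) (K : Fin n → Set (List α))
    (hreg : Language.IsRegular L)
    (hL : (show Language α from L) = ⊤ * (show Language α from L))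
    (hinj : Function.Injective K)
    (hq : ∀ i, ∃ w, K i = leftQuotient L w)
    (hall : ∀ w, ∃ i, leftQuotient L w = K i)
    (hK0 : K ⟨0, hn⟩ = L) :
    Set.ncard {S : Set (Fin n) | (atomicInter K S).Nonempty} ≤ 2 ^ (n - 1) + 1 :=
  left_ideal_card_atoms_general hn L K hL hq hK0
end

section
/- A regular two-sided ideal with n quotients has at most 2^{n-2} + 1 atoms, for n ≥ 2. -/
/-!
Every word `x` lies in exactly one atom, namely `A_S` with `S = {i | x ∈ K i}`. A quotient
`K i₀` equal to `Σ*` forces `i₀ ∈ S`, and since a left ideal `L = K_0` is contained in all its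
quotients, `0 ∈ S` forces `S` to be everything. So apart from the full atom, every nonempty atom
has `i₀ ∈ S` and `0 ∉ S`, leaving `2^(n-2)` choices for `S`.
-/

theorem Set.ncard_setOf_notMem_and_mem_le {β : Type*} [Finite β] (a b : β) :
    {S : Set β | a ∉ S ∧ b ∈ S}.ncard ≤ 2 ^ (Nat.card β - 2) := by
  rcases eq_or_ne a b with rfl | hab
  · simp
  have hsub : {S : Set β | a ∉ S ∧ b ∈ S} ⊆ insert b '' 𝒫 ({a, b}ᶜ) := by
    rintro S ⟨haS, hbS⟩
    refine ⟨S \ {a, b}, fun x hx => by simp_all, ?_⟩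
    ext x
    by_cases hxb : x = b
    · simp [hxb, hbS]
    · by_cases hxa : x = a <;> simp_all
  calc {S : Set β | a ∉ S ∧ b ∈ S}.ncard
      ≤ (insert b '' 𝒫 ({a, b}ᶜ)).ncard := Set.ncard_le_ncard hsub
    _ ≤ (𝒫 ({a, b}ᶜ : Set β)).ncard := Set.ncard_image_le
    _ = 2 ^ (Nat.card β - 2) := by rw [Set.ncard_powerset, Set.ncard_compl, Set.ncard_pair hab]

section Atoms

variable {α : Type*} {n : ℕ} {K : Fin n → Set (List α)}

theorem mem_atomicInter_iff {S : Set (Fin n)} {x : List α} :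
    x ∈ atomicInter K S ↔ S = {i | x ∈ K i} := by
  simp only [atomicInter, Set.mem_inter_iff, Set.mem_iInter, Set.mem_compl_iff, Set.ext_iff,
    Set.mem_ofPred_eq]
  exact ⟨fun h i => ⟨h.1 i, fun hx => by_contra fun hi => h.2 i hi hx⟩,
    fun h => ⟨fun i => (h i).1, fun i hi hx => hi ((h i).2 hx)⟩⟩

theorem setOf_atomicInter_nonempty_subset {z i₀ : Fin n} (hz : ∀ i, K z ⊆ K i)
    (hi₀ : K i₀ = Set.univ) :
    {S | (atomicInter K S).Nonempty} ⊆ insert Set.univ {S | z ∉ S ∧ i₀ ∈ S} := by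
  rintro S ⟨x, hx⟩
  rw [mem_atomicInter_iff] at hx
  subst hx
  by_cases hxz : x ∈ K z
  · exact Or.inl (Set.eq_univ_of_forall fun i => hz i hxz)
  · exact Or.inr ⟨hxz, by simp [hi₀]⟩

end Atoms

theorem Language.append_mem_of_eq_top_mul_mul_top {α : Type*} {L : Language α}
    (hL : L = ⊤ * L * ⊤) (u : List α) {x : List α} (hx : x ∈ L) : u ++ x ∈ L := by
  rw [hL, ← List.append_nil (u ++ x)]
  exact Language.append_mem_mul (Language.append_mem_mul (Set.mem_univ u) hx) (Set.mem_univ [])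

/-- A regular two-sided ideal with `n ≥ 2` quotients has at most `2^(n-2) + 1` atoms. -/
theorem two_sided_ideal_card_atoms {α : Type*} {n : ℕ} (hn : 2 ≤ n)
    (L : Set (List α)) (K : Fin n → Set (List α)) (i₀ : Fin n)
    (hL : (show Language α from L) = ⊤ * (show Language α from L) * ⊤)
    (hq : ∀ i, ∃ w, K i = leftQuotient L w)
    (hK0 : K ⟨0, by omega⟩ = L)
    (hi₀ : K i₀ = Set.univ) :
    Set.ncard {S : Set (Fin n) | (atomicInter K S).Nonempty} ≤ 2 ^ (n - 2) + 1 := by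
  have hK0_subset (i : Fin n) : K ⟨0, by omega⟩ ⊆ K i := by
    obtain ⟨w, hw⟩ := hq i
    rw [hK0, hw]
    exact fun x hx => Language.append_mem_of_eq_top_mul_mul_top hL w hx
  calc Set.ncard {S : Set (Fin n) | (atomicInter K S).Nonempty}
      ≤ (insert Set.univ {S | ⟨0, by omega⟩ ∉ S ∧ i₀ ∈ S}).ncard :=
        Set.ncard_le_ncard (setOf_atomicInter_nonempty_subset hK0_subset hi₀)
    _ ≤ {S : Set (Fin n) | ⟨0, by omega⟩ ∉ S ∧ i₀ ∈ S}.ncard + 1 := Set.ncard_insert_le _ _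
    _ ≤ 2 ^ (n - 2) + 1 := by
        simpa using Set.ncard_setOf_notMem_and_mem_le (⟨0, by omega⟩ : Fin n) i₀
end

section
/- In the atom DFA D_S of a minimal DFA D, a state (X,Y) with X ∩ Y = ∅ is a final state if and only if X ⊆ F and Y ∩ F = ∅; moreover for any letter a, the successor of (X,Y) is (Xa, Ya) if these images are disjoint, else the sink ⊥, and this transition function makes D_S a well-defined DFA recognizing the atomic intersection A_S. -/
/-! By induction on the word, `(X, Y)` leads to acceptance under `w` exactly when `w` is accepted
from every state of `X` and rejected from every state of `Y`; starting from `(S, Sᶜ)` this is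
membership in `A_S`. -/

open Classical in
/-- The atom DFA `D_S` of a DFA `D`: states are pairs of disjoint subsets of states
of `D` (represented as `some (X, Y)`) together with a sink `⊥` (represented as
`none`); transitions apply the step function of `D` elementwise, going to the sink
when the images intersect. -/
noncomputable def atomDFA {α σ : Type*} (D : DFA α σ) (S : Set σ) :
    DFA α (Option (Set σ × Set σ)) where
  step st a :=
    match st with
    | none => none
    | some (X, Y) =>
        if Disjoint ((fun q => D.step q a) '' X) ((fun q => D.step q a) '' Y) then
          some ((fun q => D.step q a) '' X, (fun q => D.step q a) '' Y)
        else none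
  start := some (S, Sᶜ)
  accept := {st | ∃ X Y, st = some (X, Y) ∧ X ⊆ D.accept ∧ Y ∩ D.accept = ∅}

section

variable {α σ : Type*} (D : DFA α σ) (S : Set σ)

theorem atomDFA_some_mem_accept_iff (X Y : Set σ) :
    some (X, Y) ∈ (atomDFA D S).accept ↔ X ⊆ D.accept ∧ Y ∩ D.accept = ∅ := by
  simp [atomDFA]

open Classical in
theorem atomDFA_step_some (X Y : Set σ) (a : α) :
    (atomDFA D S).step (some (X, Y)) a =
      if Disjoint ((fun q => D.step q a) '' X) ((fun q => D.step q a) '' Y) then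
        some ((fun q => D.step q a) '' X, (fun q => D.step q a) '' Y)
      else none :=
  rfl

theorem atomDFA_evalFrom_none (w : List α) : (atomDFA D S).evalFrom none w = none := by
  induction w with
  | nil => rfl
  | cons a w ih => exact ih

theorem atomDFA_evalFrom_some_mem_accept_iff (X Y : Set σ) (w : List α) :
    (atomDFA D S).evalFrom (some (X, Y)) w ∈ (atomDFA D S).accept ↔
      (∀ i ∈ X, D.evalFrom i w ∈ D.accept) ∧ ∀ i ∈ Y, D.evalFrom i w ∉ D.accept := by
  induction w generalizing X Y with
  | nil =>
    simp only [DFA.evalFrom_nil, atomDFA_some_mem_accept_iff, Set.eq_empty_iff_forall_notMem,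
      Set.mem_inter_iff, not_and]
    rfl
  | cons a w ih =>
    simp only [DFA.evalFrom_cons, atomDFA_step_some]
    split_ifs with hdisj
    · simp only [ih, Set.forall_mem_image]
    -- a state of `X` and one of `Y` merge, so no word can be accepted from one and not the other
    · obtain ⟨_, ⟨i, hi, rfl⟩, ⟨j, hj, hji⟩⟩ := Set.not_disjoint_iff.mp hdisj
      rw [atomDFA_evalFrom_none]
      refine iff_of_false (by simp [atomDFA]) fun ⟨hX, hY⟩ => hY j hj ?_
      rw [show D.step j a = D.step i a from hji]
      exact hX i hi

end

open Classical in
theorem atomDFA_spec_general {α σ : Type*} (D : DFA α σ)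
    (S : Set σ) :
    (∀ X Y : Set σ, Disjoint X Y →
      (some (X, Y) ∈ (atomDFA D S).accept ↔ X ⊆ D.accept ∧ Y ∩ D.accept = ∅)) ∧
    (∀ (X Y : Set σ) (a : α),
      (atomDFA D S).step (some (X, Y)) a =
        if Disjoint ((fun q => D.step q a) '' X) ((fun q => D.step q a) '' Y) then
          some ((fun q => D.step q a) '' X, (fun q => D.step q a) '' Y)
        else none) ∧
    ((⋂ i ∈ S, {w : List α | D.evalFrom i w ∈ D.accept}) ∩
        (⋂ i ∈ Sᶜ, {w : List α | D.evalFrom i w ∈ D.accept}ᶜ) =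
      (atomDFA D S).accepts) := by
  refine ⟨fun X Y _ => atomDFA_some_mem_accept_iff D S X Y, atomDFA_step_some D S, ?_⟩
  ext w
  change _ ↔ (atomDFA D S).evalFrom (some (S, Sᶜ)) w ∈ (atomDFA D S).accept
  rw [atomDFA_evalFrom_some_mem_accept_iff]
  simp

open Classical in
/-- In the atom DFA `D_S` of a minimal DFA `D`: a state `(X, Y)` with `X ∩ Y = ∅` is
final iff `X ⊆ F` and `Y ∩ F = ∅`; the successor of `(X, Y)` under a letter `a` is
`(Xa, Ya)` if these images are disjoint and the sink otherwise; and `D_S`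
recognizes the atomic intersection `A_S`. -/
theorem atomDFA_spec {α σ : Type*} (D : DFA α σ)
    (hreach : ∀ q : σ, ∃ w : List α, D.evalFrom D.start w = q)
    (hdist : ∀ p q : σ,
      (∀ w : List α, D.evalFrom p w ∈ D.accept ↔ D.evalFrom q w ∈ D.accept) → p = q)
    (S : Set σ) :
    (∀ X Y : Set σ, Disjoint X Y →
      (some (X, Y) ∈ (atomDFA D S).accept ↔ X ⊆ D.accept ∧ Y ∩ D.accept = ∅)) ∧
    (∀ (X Y : Set σ) (a : α),
      (atomDFA D S).step (some (X, Y)) a =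
        if Disjoint ((fun q => D.step q a) '' X) ((fun q => D.step q a) '' Y) then
          some ((fun q => D.step q a) '' X, (fun q => D.step q a) '' Y)
        else none) ∧
    ((⋂ i ∈ S, {w : List α | D.evalFrom i w ∈ D.accept}) ∩
        (⋂ i ∈ Sᶜ, {w : List α | D.evalFrom i w ∈ D.accept}ᶜ) =
      (atomDFA D S).accepts) :=
  atomDFA_spec_general D S
end
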